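/- (Lemma 4.) Let s ≥ 1 and let B ∈ ℝ^{n×m} satisfy the RIP with constant δ_{2s} < √2 − 1; set α = 2√(1 + δ_{2s})/(1 − δ_{2s}) and ρ = √2·δ_{2s}/(1 − δ_{2s}) (so that ρ < 1). Let ū_0,…,ū_{K−1}, u*_0,…,u*_{K−1} ∈ ℝ^m with each ū_k s-sparse and ∑_{k=0}^{K−1}‖u*_k‖₁ ≤ ∑_{k=0}^{K−1}‖ū_k‖₁. Set h_k = u*_k − ū_k and T0(k) = supp(ū_k); for each k assume |T0(k)^c| ≥ s and let T1(k) ⊆ T0(k)^c be a set of exactly s indices such that |(h_k)_i| ≥ |(h_k)_j| for every i ∈ T1(k) and every j ∈ T0(k)^c ∖ T1(k). Suppose moreover that ‖B h_k‖₂ ≤ 2cε for every k = 0,…,K−1, where c ≥ 0 and ε ≥ 0. Then ∑_{k=0}^{K−1} ‖(h_k)_{T0(k)∪T1(k)}‖₂ ≤ K(1 − ρ)^{−1} α c ε. -/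

import Mathlib

open Matrix Finset

noncomputable def l2norm {k : ℕ} (x : Fin k → ℝ) : ℝ := Real.sqrt (∑ i, (x i) ^ 2)

def l1norm {k : ℕ} (x : Fin k → ℝ) : ℝ := ∑ i, |x i|

def Sparse {k : ℕ} (s : ℕ) (x : Fin k → ℝ) : Prop :=
  (Finset.univ.filter fun i => x i ≠ 0).card ≤ s

def RIP {n m : ℕ} (s : ℕ) (δ : ℝ) (Φ : Matrix (Fin n) (Fin m) ℝ) : Prop :=
  ∀ c : Fin m → ℝ, Sparse s c →
    (1 - δ) * (l2norm c) ^ 2 ≤ (l2norm (Φ.mulVec c)) ^ 2 ∧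
    (l2norm (Φ.mulVec c)) ^ 2 ≤ (1 + δ) * (l2norm c) ^ 2

noncomputable def support {k : ℕ} (x : Fin k → ℝ) : Finset (Fin k) :=
  Finset.univ.filter fun i => x i ≠ 0

def restrict {k : ℕ} (T : Finset (Fin k)) (x : Fin k → ℝ) : Fin k → ℝ :=
  fun i => if i ∈ T then x i else 0

/-!
Fix `k`, let `h = u*ₖ - ūₖ`, `x = h_{T₀ ∪ T₁}` and `y = h - x`. Then
`(1 - δ) ‖x‖² ≤ ‖Bx‖² = ⟨Bx, Bh⟩ - ⟨Bx, By⟩`. The first term is at most `√(1 + δ) ‖x‖ ‖Bh‖`.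
For the second, cut `y` into `s`-sparse blocks of decreasing magnitude: restricted orthogonality
bounds the pairing of each block with `B h_{T₀}` and with `B h_{T₁}`, and since every block is
dominated by the average of the previous one, the block norms add up to at most `‖h_{T₀ᶜ}‖₁ / √s`.
Hence `√s (1 - δ) ‖x‖ ≤ √s √(1 + δ) ‖Bh‖ + √2 δ ‖h_{T₀ᶜ}‖₁`.

Summed over `k`, the ℓ₁ inequality between `u*` and `ū` gives
`∑ ‖(hₖ)_{T₀ᶜ}‖₁ ≤ ∑ ‖(hₖ)_{T₀}‖₁ ≤ √s ∑ ‖xₖ‖`, so the sum of the bounds closes on itself,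
with gap `1 - (1 + √2) δ > 0`.
-/

local notation:70 x:71 " ↾ " T:71 => @_root_.restrict _ T x

theorem Finset.exists_subset_card_eq_forall_le {α β : Type*} [DecidableEq α] [LinearOrder β]
    (f : α → β) (A : Finset α) {s : ℕ} (hs : s ≤ A.card) :
    ∃ S ⊆ A, S.card = s ∧ ∀ i ∈ S, ∀ j ∈ A \ S, f j ≤ f i := by
  induction s with
  | zero => exact ⟨∅, empty_subset A, card_empty, by simp⟩
  | succ s ih =>
    obtain ⟨S, hSA, hScard, hStop⟩ := ih (by omega)
    have hrest : (A \ S).Nonempty := by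
      rw [← card_pos, card_sdiff_of_subset hSA]; omega
    obtain ⟨a, ha, hamax⟩ := exists_max_image (A \ S) f hrest
    have haS : a ∉ S := (mem_sdiff.mp ha).2
    refine ⟨insert a S, insert_subset (mem_sdiff.mp ha).1 hSA,
      by rw [card_insert_of_notMem haS, hScard], ?_⟩
    intro i hi j hj
    have hj' : j ∈ A \ S := by
      simp only [mem_sdiff, mem_insert, not_or] at hj ⊢; exact ⟨hj.1, hj.2.2⟩
    rcases mem_insert.mp hi with rfl | hi
    · exact hamax j hj'
    · exact hStop i hi j hj'

section Vectors

variable {k : ℕ}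

lemma sparse_iff {s : ℕ} {x : Fin k → ℝ} : Sparse s x ↔ (support x).card ≤ s := Iff.rfl

lemma mem_support {x : Fin k → ℝ} {i : Fin k} : i ∈ support x ↔ x i ≠ 0 := by
  simp [support]

lemma support_restrict (T : Finset (Fin k)) (x : Fin k → ℝ) :
    support (x ↾ T) = T ∩ support x := by
  ext i; by_cases hi : i ∈ T <;> simp [mem_support, _root_.restrict, hi]

lemma restrict_add_restrict_compl (T : Finset (Fin k)) (x : Fin k → ℝ) :
    x ↾ T + x ↾ Tᶜ = x := by
  ext i; by_cases hi : i ∈ T <;> simp [_root_.restrict, hi]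

lemma restrict_union {T T' : Finset (Fin k)} (hT : Disjoint T T') (x : Fin k → ℝ) :
    x ↾ (T ∪ T') = x ↾ T + x ↾ T' := by
  ext i
  by_cases hi : i ∈ T
  · simp [_root_.restrict, hi, disjoint_left.mp hT hi]
  · by_cases hi' : i ∈ T' <;> simp [_root_.restrict, hi, hi']

lemma sum_comp_restrict {f : ℝ → ℝ} (hf : f 0 = 0) (T : Finset (Fin k)) (x : Fin k → ℝ) :
    ∑ i, f ((x ↾ T) i) = ∑ i ∈ T, f (x i) := by
  simp [_root_.restrict, apply_ite f, hf, sum_ite_mem]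

lemma sum_comp_eq_sum_support {f : ℝ → ℝ} (hf : f 0 = 0) (x : Fin k → ℝ) :
    ∑ i, f (x i) = ∑ i ∈ support x, f (x i) := by
  rw [← sum_comp_restrict hf (support x)]
  refine sum_congr rfl fun i _ => ?_
  by_cases hi : x i = 0 <;> simp [_root_.restrict, mem_support, hi, hf]

lemma abs_restrict_le (T : Finset (Fin k)) (x : Fin k → ℝ) (i : Fin k) : |(x ↾ T) i| ≤ |x i| := by
  by_cases hi : i ∈ T <;> simp [_root_.restrict, hi]

lemma l2norm_nonneg (x : Fin k → ℝ) : 0 ≤ l2norm x := Real.sqrt_nonneg _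

@[simp] lemma l2norm_zero : l2norm (0 : Fin k → ℝ) = 0 := by simp [l2norm]

lemma l1norm_nonneg (x : Fin k → ℝ) : 0 ≤ l1norm x := sum_nonneg fun _ _ => abs_nonneg _

lemma l2norm_sq (x : Fin k → ℝ) : l2norm x ^ 2 = x ⬝ᵥ x := by
  rw [l2norm, Real.sq_sqrt (by positivity)]
  simp [dotProduct, sq]

lemma l2norm_eq_zero {x : Fin k → ℝ} : l2norm x = 0 ↔ x = 0 := by
  rw [← dotProduct_self_eq_zero, ← l2norm_sq, sq_eq_zero_iff]

lemma dotProduct_le_l2norm_mul (x y : Fin k → ℝ) : x ⬝ᵥ y ≤ l2norm x * l2norm y :=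
  Real.sum_mul_le_sqrt_mul_sqrt univ x y

lemma dotProduct_eq_zero_of_disjoint {x y : Fin k → ℝ} (h : Disjoint (support x) (support y)) :
    x ⬝ᵥ y = 0 := by
  refine sum_eq_zero fun i _ => ?_
  by_contra hxy
  exact disjoint_left.mp h (mem_support.mpr (left_ne_zero_of_mul hxy))
    (mem_support.mpr (right_ne_zero_of_mul hxy))

lemma l1norm_restrict (T : Finset (Fin k)) (x : Fin k → ℝ) : l1norm (x ↾ T) = ∑ i ∈ T, |x i| :=
  sum_comp_restrict abs_zero T x

lemma l2norm_restrict (T : Finset (Fin k)) (x : Fin k → ℝ) :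
    l2norm (x ↾ T) = √(∑ i ∈ T, x i ^ 2) := by
  rw [l2norm, sum_comp_restrict (f := (· ^ 2)) (zero_pow two_ne_zero)]

lemma l1norm_restrict_add_restrict_compl (T : Finset (Fin k)) (x : Fin k → ℝ) :
    l1norm (x ↾ T) + l1norm (x ↾ Tᶜ) = l1norm x := by
  rw [l1norm_restrict, l1norm_restrict, sum_add_sum_compl, l1norm]

lemma l1norm_restrict_union {T T' : Finset (Fin k)} (hT : Disjoint T T') (x : Fin k → ℝ) :
    l1norm (x ↾ (T ∪ T')) = l1norm (x ↾ T) + l1norm (x ↾ T') := by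
  simp only [l1norm_restrict, sum_union hT]

lemma l2norm_restrict_le_of_subset {T T' : Finset (Fin k)} (hT : T ⊆ T') (x : Fin k → ℝ) :
    l2norm (x ↾ T) ≤ l2norm (x ↾ T') := by
  rw [l2norm_restrict, l2norm_restrict]
  exact Real.sqrt_le_sqrt (sum_le_sum_of_subset_of_nonneg hT fun _ _ _ => sq_nonneg _)

lemma l2norm_restrict_add_le {T T' : Finset (Fin k)} (hT : Disjoint T T') (x : Fin k → ℝ) :
    l2norm (x ↾ T) + l2norm (x ↾ T') ≤ √2 * l2norm (x ↾ (T ∪ T')) := by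
  have hsq : l2norm (x ↾ (T ∪ T')) ^ 2 = l2norm (x ↾ T) ^ 2 + l2norm (x ↾ T') ^ 2 := by
    simp only [l2norm_restrict, sum_union hT]
    rw [Real.sq_sqrt, Real.sq_sqrt, Real.sq_sqrt] <;> positivity
  refine (pow_le_pow_iff_left₀ (add_nonneg (l2norm_nonneg _) (l2norm_nonneg _))
    (mul_nonneg (Real.sqrt_nonneg 2) (l2norm_nonneg _)) two_ne_zero).mp ?_
  rw [mul_pow, Real.sq_sqrt zero_le_two, hsq]
  nlinarith [sq_nonneg (l2norm (x ↾ T) - l2norm (x ↾ T'))]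

lemma card_mul_abs_le_l1norm_restrict {T : Finset (Fin k)} {x : Fin k → ℝ} {j : Fin k}
    (h : ∀ i ∈ T, |x j| ≤ |x i|) : T.card * |x j| ≤ l1norm (x ↾ T) := by
  rw [l1norm_restrict]
  simpa using card_nsmul_le_sum T (fun i => |x i|) _ h

lemma l1norm_restrict_compl_sub_le {u : Fin k → ℝ} {T : Finset (Fin k)} (hT : support u ⊆ T)
    (h : Fin k → ℝ) : l1norm (h ↾ Tᶜ) - l1norm (h ↾ T) ≤ l1norm (u + h) - l1norm u := by
  simp only [l1norm, ← sum_sub_distrib]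
  refine sum_le_sum fun i _ => ?_
  by_cases hi : i ∈ T
  · have := abs_sub_abs_le_abs_add (u i) (h i)
    simp only [_root_.restrict, mem_compl, hi, not_true_eq_false, if_true, if_false, abs_zero,
      Pi.add_apply]
    linarith
  · have hu : u i = 0 := by_contra fun hu => hi (hT (mem_support.mpr hu))
    simp [_root_.restrict, hi, hu]

lemma sparse_restrict {s : ℕ} {T : Finset (Fin k)} (hT : T.card ≤ s) (x : Fin k → ℝ) :
    Sparse s (x ↾ T) := by
  rw [sparse_iff, support_restrict]
  exact (card_le_card inter_subset_left).trans hT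

lemma Sparse.add {s s' : ℕ} {x y : Fin k → ℝ} (hx : Sparse s x) (hy : Sparse s' y) :
    Sparse (s + s') (x + y) := by
  have hsub : support (x + y) ⊆ support x ∪ support y := by
    intro i hi
    rw [mem_union, mem_support, mem_support]
    by_contra! h
    simp [mem_support, h.1, h.2] at hi
  exact (card_le_card hsub).trans ((card_union_le _ _).trans (add_le_add hx hy))

lemma Sparse.smul {s : ℕ} {x : Fin k → ℝ} (a : ℝ) (hx : Sparse s x) : Sparse s (a • x) := by
  refine (card_le_card fun i hi => ?_).trans hx
  exact mem_support.mpr (right_ne_zero_of_mul (mem_support.mp hi))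

lemma Sparse.l1norm_le {s : ℕ} {x : Fin k → ℝ} (hx : Sparse s x) : l1norm x ≤ √s * l2norm x := by
  rw [l1norm, l2norm, sum_comp_eq_sum_support abs_zero,
    sum_comp_eq_sum_support (f := (· ^ 2)) (zero_pow two_ne_zero), ← Real.sqrt_mul (by positivity)]
  refine Real.le_sqrt_of_sq_le ((sq_sum_le_card_mul_sum_sq).trans ?_)
  simp only [sq_abs]
  gcongr
  exact_mod_cast hx

lemma l1norm_restrict_le_sqrt_mul_l2norm_restrict {s : ℕ} {T T' : Finset (Fin k)}
    (hT : T.card ≤ s) (hTT' : T ⊆ T') (x : Fin k → ℝ) :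
    l1norm (x ↾ T) ≤ √s * l2norm (x ↾ T') :=
  (sparse_restrict hT x).l1norm_le.trans
    (mul_le_mul_of_nonneg_left (l2norm_restrict_le_of_subset hTT' x) (Real.sqrt_nonneg _))

lemma Sparse.sqrt_mul_l2norm_le {s : ℕ} {x : Fin k → ℝ} {M : ℝ} (hx : Sparse s x)
    (hM0 : 0 ≤ M) (hM : ∀ i, s * |x i| ≤ M) : √s * l2norm x ≤ M := by
  have hsq : (√s * l2norm x) ^ 2 ≤ M * (√s * l2norm x) := by
    calc (√s * l2norm x) ^ 2 = ∑ i, (s * |x i|) * |x i| := by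
          rw [mul_pow, Real.sq_sqrt (by positivity), l2norm, Real.sq_sqrt (by positivity), mul_sum]
          exact sum_congr rfl fun i _ => by rw [mul_assoc, ← sq, sq_abs]
      _ ≤ ∑ i, M * |x i| := sum_le_sum fun i _ => mul_le_mul_of_nonneg_right (hM i) (abs_nonneg _)
      _ = M * l1norm x := by rw [l1norm, mul_sum]
      _ ≤ M * (√s * l2norm x) := mul_le_mul_of_nonneg_left hx.l1norm_le hM0
  nlinarith [Real.sqrt_nonneg s, l2norm_nonneg x]

end Vectors

namespace RIP

variable {n m s : ℕ} {δ : ℝ} {B : Matrix (Fin n) (Fin m) ℝ}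

lemma nonneg (hB : RIP s δ B) (hs : 0 < s) (i : Fin m) : 0 ≤ δ := by
  have hsparse : Sparse s (Pi.single i (1 : ℝ)) := by
    refine (card_le_card (t := {i}) fun j hj => ?_).trans (by rw [card_singleton]; exact hs)
    by_contra hji
    simp [Pi.single_apply, mem_singleton.not.mp hji] at hj
  have hnorm : l2norm (Pi.single i (1 : ℝ)) = 1 := by simp [l2norm, Pi.single_apply]
  have := hB _ hsparse
  rw [hnorm] at this
  linarith [this.1, this.2]

lemma l2norm_mulVec_le (hB : RIP s δ B) {x : Fin m → ℝ} (hx : Sparse s x) :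
    l2norm (B *ᵥ x) ≤ √(1 + δ) * l2norm x :=
  calc l2norm (B *ᵥ x) = √(l2norm (B *ᵥ x) ^ 2) := (Real.sqrt_sq (l2norm_nonneg _)).symm
    _ ≤ √((1 + δ) * l2norm x ^ 2) := Real.sqrt_le_sqrt (hB x hx).2
    _ = √(1 + δ) * l2norm x := by
      rw [Real.sqrt_mul' _ (sq_nonneg _), Real.sqrt_sq (l2norm_nonneg _)]

lemma abs_dotProduct_mulVec_le {s' : ℕ} (hB : RIP (s + s') δ B) {x z : Fin m → ℝ}
    (hx : Sparse s x) (hz : Sparse s' z) (hxz : Disjoint (support x) (support z)) :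
    |B *ᵥ x ⬝ᵥ B *ᵥ z| ≤ δ * l2norm x * l2norm z := by
  rcases (l2norm_nonneg z).eq_or_lt with ha | ha
  · simp [l2norm_eq_zero.mp ha.symm]
  rcases (l2norm_nonneg x).eq_or_lt with hb | hb
  · simp [l2norm_eq_zero.mp hb.symm]
  set a := l2norm z with ha_def
  set b := l2norm x with hb_def
  -- polarization with `a • x ± b • z`, two vectors of the same norm `√2 a b`
  have hu := hB (a • x + b • z) ((hx.smul a).add (hz.smul b))
  have hv := hB (a • x + (-b) • z) ((hx.smul a).add (hz.smul (-b)))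
  have horth : x ⬝ᵥ z = 0 := dotProduct_eq_zero_of_disjoint hxz
  simp only [l2norm_sq, mulVec_add, mulVec_smul, dotProduct_add, add_dotProduct, dotProduct_smul,
    smul_dotProduct, smul_eq_mul, dotProduct_comm z x, dotProduct_comm (B *ᵥ z) (B *ᵥ x),
    horth] at hu hv
  simp only [← l2norm_sq, ← ha_def, ← hb_def] at hu hv
  have hab : 0 < a * b := mul_pos ha hb
  rw [abs_le]
  constructor
  · refine le_of_mul_le_mul_left ?_ hab
    nlinarith [hu.1, hv.2]
  · refine le_of_mul_le_mul_left ?_ hab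
    nlinarith [hu.2, hv.1]

/-- Peel off the `s` largest entries of `y`; the rest is dominated entrywise by their average,
so the induction continues with `M := ‖y_S‖₁`. -/
theorem sqrt_mul_abs_dotProduct_mulVec_le {s' : ℕ} (hs : 0 < s) (hB : RIP (s' + s) δ B)
    (hδ : 0 ≤ δ) {w : Fin m → ℝ} (hw : Sparse s' w) {M : ℝ} {y : Fin m → ℝ} (hM0 : 0 ≤ M)
    (hM : ∀ i, s * |y i| ≤ M) (hwy : Disjoint (support w) (support y)) :
    √s * |B *ᵥ w ⬝ᵥ B *ᵥ y| ≤ δ * l2norm w * (M + l1norm y) := by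
  have hδw : 0 ≤ δ * l2norm w := mul_nonneg hδ (l2norm_nonneg w)
  induction hN : (support y).card using Nat.strong_induction_on generalizing y M with
  | _ N ih =>
  by_cases hys : Sparse s y
  · calc √s * |B *ᵥ w ⬝ᵥ B *ᵥ y| ≤ √s * (δ * l2norm w * l2norm y) := by
          gcongr; exact hB.abs_dotProduct_mulVec_le hw hys hwy
      _ = δ * l2norm w * (√s * l2norm y) := by ring
      _ ≤ δ * l2norm w * (M + l1norm y) := by
          gcongr; linarith [hys.sqrt_mul_l2norm_le hM0 hM, l1norm_nonneg y]
  rw [sparse_iff, not_le] at hys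
  obtain ⟨S, hSy, hScard, hStop⟩ :=
    (support y).exists_subset_card_eq_forall_le (fun i => |y i|) hys.le
  have hsupp : ∀ T, support (y ↾ T) ⊆ support y := fun T => by
    rw [support_restrict]; exact inter_subset_right
  have hhead : √s * |B *ᵥ w ⬝ᵥ B *ᵥ (y ↾ S)| ≤ δ * l2norm w * M := by
    calc √s * |B *ᵥ w ⬝ᵥ B *ᵥ (y ↾ S)| ≤ √s * (δ * l2norm w * l2norm (y ↾ S)) := by
          gcongr
          exact hB.abs_dotProduct_mulVec_le hw (sparse_restrict hScard.le y)
            (hwy.mono_right (hsupp S))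
      _ = δ * l2norm w * (√s * l2norm (y ↾ S)) := by ring
      _ ≤ δ * l2norm w * M := by
          gcongr
          refine (sparse_restrict hScard.le y).sqrt_mul_l2norm_le hM0 fun i => ?_
          exact (mul_le_mul_of_nonneg_left (abs_restrict_le S y i) (by positivity)).trans (hM i)
  have htail_card : (support (y ↾ Sᶜ)).card < N := by
    rw [support_restrict, inter_comm, ← sdiff_eq_inter_compl, card_sdiff_of_subset hSy, hScard]
    omega
  have htail_le : ∀ j, s * |(y ↾ Sᶜ) j| ≤ l1norm (y ↾ S) := by
    intro j
    by_cases hj : j ∈ S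
    · simp [_root_.restrict, hj, l1norm_nonneg]
    rw [← hScard]
    simp only [_root_.restrict, mem_compl, hj, not_false_eq_true, if_true]
    refine card_mul_abs_le_l1norm_restrict fun i hi => ?_
    by_cases hyj : y j = 0
    · simp [hyj]
    · exact hStop i hi j (mem_sdiff.mpr ⟨mem_support.mpr hyj, hj⟩)
  have htail := ih _ htail_card (l1norm_nonneg _) htail_le (hwy.mono_right (hsupp Sᶜ)) rfl
  calc √s * |B *ᵥ w ⬝ᵥ B *ᵥ y|
      ≤ √s * |B *ᵥ w ⬝ᵥ B *ᵥ (y ↾ S)| + √s * |B *ᵥ w ⬝ᵥ B *ᵥ (y ↾ Sᶜ)| := by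
        have hsplit : B *ᵥ w ⬝ᵥ B *ᵥ y = B *ᵥ w ⬝ᵥ B *ᵥ (y ↾ S) + B *ᵥ w ⬝ᵥ B *ᵥ (y ↾ Sᶜ) := by
          rw [← dotProduct_add, ← mulVec_add, restrict_add_restrict_compl]
        rw [hsplit, ← mul_add]
        gcongr
        exact abs_add_le _ _
    _ ≤ δ * l2norm w * M + δ * l2norm w * (l1norm (y ↾ S) + l1norm (y ↾ Sᶜ)) :=
        add_le_add hhead htail
    _ = δ * l2norm w * (M + l1norm y) := by rw [l1norm_restrict_add_restrict_compl]; ring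

theorem sqrt_mul_abs_dotProduct_mulVec_restrict_compl_le (hs : 0 < s) (hB : RIP (s + s) δ B)
    (hδ : 0 ≤ δ) {h : Fin m → ℝ} {T₀ T₁ T : Finset (Fin m)} (hT₁ : T₁ ⊆ T₀ᶜ)
    (hT₁card : T₁.card = s) (hT₁max : ∀ i ∈ T₁, ∀ j ∈ T₀ᶜ \ T₁, |h j| ≤ |h i|)
    (hT : T ⊆ T₀ ∪ T₁) (hTcard : T.card ≤ s) :
    √s * |B *ᵥ (h ↾ T) ⬝ᵥ B *ᵥ (h ↾ (T₀ ∪ T₁)ᶜ)| ≤ δ * l2norm (h ↾ T) * l1norm (h ↾ T₀ᶜ) := by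
  have hle : ∀ j, s * |(h ↾ (T₀ ∪ T₁)ᶜ) j| ≤ l1norm (h ↾ T₁) := by
    intro j
    by_cases hj : j ∈ T₀ ∪ T₁
    · rw [_root_.restrict, if_neg fun h' => mem_compl.mp h' hj, abs_zero, mul_zero]
      exact l1norm_nonneg _
    rw [← hT₁card]
    simp only [_root_.restrict, mem_compl, hj, not_false_eq_true, if_true]
    refine card_mul_abs_le_l1norm_restrict fun i hi => hT₁max i hi j ?_
    simp only [mem_union, not_or] at hj
    exact mem_sdiff.mpr ⟨mem_compl.mpr hj.1, hj.2⟩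
  have hT₀c : T₀ᶜ = T₁ ∪ (T₀ ∪ T₁)ᶜ := by
    ext i
    have := @hT₁ i
    simp only [mem_compl, mem_union] at this ⊢
    tauto
  rw [hT₀c, l1norm_restrict_union (disjoint_compl_right.mono_right
    (compl_subset_compl.mpr subset_union_right))]
  refine hB.sqrt_mul_abs_dotProduct_mulVec_le hs hδ (sparse_restrict hTcard h)
    (l1norm_nonneg _) hle ?_
  rw [support_restrict, support_restrict]
  exact (disjoint_compl_right.mono_left hT).mono inter_subset_left inter_subset_left

theorem sqrt_mul_l2norm_restrict_union_le (hs : 0 < s) (hB : RIP (2 * s) δ B) (hδ : 0 ≤ δ)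
    {h : Fin m → ℝ} {T₀ T₁ : Finset (Fin m)} (hT₀ : T₀.card ≤ s) (hT₁ : T₁ ⊆ T₀ᶜ)
    (hT₁card : T₁.card = s) (hT₁max : ∀ i ∈ T₁, ∀ j ∈ T₀ᶜ \ T₁, |h j| ≤ |h i|) {η : ℝ}
    (hη : l2norm (B *ᵥ h) ≤ η) :
    √s * (1 - δ) * l2norm (h ↾ (T₀ ∪ T₁)) ≤
      √s * √(1 + δ) * η + √2 * δ * l1norm (h ↾ T₀ᶜ) := by
  rw [two_mul] at hB
  have hdisj : Disjoint T₀ T₁ := disjoint_left.mpr fun i hi hi' => mem_compl.mp (hT₁ hi') hi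
  set x := h ↾ (T₀ ∪ T₁) with hx_def
  set y := h ↾ (T₀ ∪ T₁)ᶜ
  set L := l1norm (h ↾ T₀ᶜ)
  have hxsparse : Sparse (s + s) x :=
    sparse_restrict ((card_union_le _ _).trans (add_le_add hT₀ hT₁card.le)) h
  have hcross : √s * |B *ᵥ x ⬝ᵥ B *ᵥ y| ≤ √2 * δ * l2norm x * L := by
    have hsplit : B *ᵥ x ⬝ᵥ B *ᵥ y = B *ᵥ (h ↾ T₀) ⬝ᵥ B *ᵥ y + B *ᵥ (h ↾ T₁) ⬝ᵥ B *ᵥ y := by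
      rw [← add_dotProduct, ← mulVec_add, hx_def, restrict_union hdisj]
    have h₀ := hB.sqrt_mul_abs_dotProduct_mulVec_restrict_compl_le hs hδ hT₁ hT₁card hT₁max
      subset_union_left hT₀
    have h₁ := hB.sqrt_mul_abs_dotProduct_mulVec_restrict_compl_le hs hδ hT₁ hT₁card hT₁max
      subset_union_right hT₁card.le
    have hsum := l2norm_restrict_add_le hdisj h
    have hδL : 0 ≤ δ * L := mul_nonneg hδ (l1norm_nonneg _)
    calc √s * |B *ᵥ x ⬝ᵥ B *ᵥ y|
        ≤ √s * |B *ᵥ (h ↾ T₀) ⬝ᵥ B *ᵥ y| + √s * |B *ᵥ (h ↾ T₁) ⬝ᵥ B *ᵥ y| := by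
          rw [hsplit, ← mul_add]; gcongr; exact abs_add_le _ _
      _ ≤ δ * L * (l2norm (h ↾ T₀) + l2norm (h ↾ T₁)) := by linarith
      _ ≤ δ * L * (√2 * l2norm x) := by gcongr
      _ = √2 * δ * l2norm x * L := by ring
  have hhead : B *ᵥ x ⬝ᵥ B *ᵥ h ≤ √(1 + δ) * l2norm x * η :=
    (dotProduct_le_l2norm_mul _ _).trans (mul_le_mul (hB.l2norm_mulVec_le hxsparse) hη
      (l2norm_nonneg _) (mul_nonneg (Real.sqrt_nonneg _) (l2norm_nonneg _)))
  have hlow : (1 - δ) * l2norm x ^ 2 ≤ B *ᵥ x ⬝ᵥ B *ᵥ h - B *ᵥ x ⬝ᵥ B *ᵥ y := by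
    rw [← restrict_add_restrict_compl (T₀ ∪ T₁) h, mulVec_add, dotProduct_add, add_sub_cancel_right,
      ← l2norm_sq]
    exact (hB x hxsparse).1
  have key : l2norm x * (√s * (1 - δ) * l2norm x) ≤
      l2norm x * (√s * √(1 + δ) * η + √2 * δ * L) := by
    have hs0 := Real.sqrt_nonneg s
    nlinarith [mul_le_mul_of_nonneg_left hlow hs0, mul_le_mul_of_nonneg_left hhead hs0,
      mul_le_mul_of_nonneg_left (neg_abs_le (B *ᵥ x ⬝ᵥ B *ᵥ y)) hs0]
  rcases (l2norm_nonneg x).eq_or_lt with hx0 | hx0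
  · have hη0 : 0 ≤ η := (l2norm_nonneg _).trans hη
    rw [← hx0, mul_zero]
    have := l1norm_nonneg (h ↾ T₀ᶜ)
    positivity
  · exact le_of_mul_le_mul_left key hx0

end RIP

theorem stmt7_general {n m K s : ℕ} (hs : 1 ≤ s)
    (B : Matrix (Fin n) (Fin m) ℝ)
    (δ : ℝ) (hδ : δ < Real.sqrt 2 - 1) (hB : RIP (2 * s) δ B)
    (ubar ustar : Fin K → Fin m → ℝ)
    (hsp : ∀ k, Sparse s (ubar k))
    (hopt : ∑ k, l1norm (ustar k) ≤ ∑ k, l1norm (ubar k))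
    (T1 : Fin K → Finset (Fin m))
    (hT1sub : ∀ k, T1 k ⊆ (support (ubar k))ᶜ)
    (hT1card : ∀ k, (T1 k).card = s)
    (hT1max : ∀ k, ∀ i ∈ T1 k, ∀ j ∈ (support (ubar k))ᶜ \ T1 k,
      |(ustar k - ubar k) j| ≤ |(ustar k - ubar k) i|)
    (c ε : ℝ)
    (hBh : ∀ k, l2norm (B.mulVec (ustar k - ubar k)) ≤ 2 * c * ε) :
    ∑ k, l2norm (restrict (support (ubar k) ∪ T1 k) (ustar k - ubar k)) ≤
      (K : ℝ) * (1 - Real.sqrt 2 * δ / (1 - δ))⁻¹ *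
        (2 * Real.sqrt (1 + δ) / (1 - δ)) * c * ε := by
  obtain rfl | hK := Nat.eq_zero_or_pos K
  · simp
  obtain ⟨i, -⟩ : (T1 ⟨0, hK⟩).Nonempty := card_pos.mp (by rw [hT1card]; exact hs)
  have hδ₀ : 0 ≤ δ := hB.nonneg (by omega) i
  have hs₀ : 0 < √(s : ℝ) := Real.sqrt_pos.mpr (by exact_mod_cast hs)
  have hgap : 0 < 1 - δ - √2 * δ := by nlinarith [Real.sq_sqrt zero_le_two, Real.sqrt_nonneg 2]
  set h := fun k => ustar k - ubar k
  set S := ∑ k, l2norm (h k ↾ (support (ubar k) ∪ T1 k))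
  have hper : ∀ k, √s * (1 - δ) * l2norm (h k ↾ (support (ubar k) ∪ T1 k)) ≤
      √s * √(1 + δ) * (2 * c * ε) + √2 * δ * l1norm (h k ↾ (support (ubar k))ᶜ) := fun k =>
    hB.sqrt_mul_l2norm_restrict_union_le (by omega) hδ₀ (sparse_iff.mp (hsp k)) (hT1sub k)
      (hT1card k) (hT1max k) (hBh k)
  have hcone : ∑ k, l1norm (h k ↾ (support (ubar k))ᶜ) ≤ ∑ k, l1norm (h k ↾ support (ubar k)) := by
    have := sum_le_sum fun k (_ : k ∈ univ) =>
      l1norm_restrict_compl_sub_le (subset_refl (support (ubar k))) (h k)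
    simp only [h, add_sub_cancel, sum_sub_distrib] at this
    linarith
  have hhead : ∑ k, l1norm (h k ↾ support (ubar k)) ≤ √s * S := by
    rw [mul_sum]
    exact sum_le_sum fun k _ =>
      l1norm_restrict_le_sqrt_mul_l2norm_restrict (sparse_iff.mp (hsp k)) subset_union_left _
  have hsum := sum_le_sum fun k (_ : k ∈ univ) => hper k
  rw [← mul_sum, sum_add_distrib, sum_const, card_univ, Fintype.card_fin, nsmul_eq_mul,
    ← mul_sum] at hsum
  have hS : √s * ((1 - δ - √2 * δ) * S) ≤ √s * (2 * K * √(1 + δ) * c * ε) := by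
    nlinarith [mul_le_mul_of_nonneg_left (hcone.trans hhead) (by positivity : 0 ≤ √2 * δ)]
  have hrhs : (K : ℝ) * (1 - √2 * δ / (1 - δ))⁻¹ * (2 * √(1 + δ) / (1 - δ)) * c * ε =
      2 * K * √(1 + δ) * c * ε / (1 - δ - √2 * δ) := by
    have : 1 - δ ≠ 0 := by nlinarith [Real.sqrt_nonneg 2]
    field_simp
  rw [hrhs, le_div_iff₀ hgap, mul_comm]
  exact le_of_mul_le_mul_left hS hs₀

/-- Lemma 4 of the paper. -/
theorem stmt7 {n m K s : ℕ} (hs : 1 ≤ s)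
    (B : Matrix (Fin n) (Fin m) ℝ)
    (δ : ℝ) (hδ : δ < Real.sqrt 2 - 1) (hB : RIP (2 * s) δ B)
    (ubar ustar : Fin K → Fin m → ℝ)
    (hsp : ∀ k, Sparse s (ubar k))
    (hopt : ∑ k, l1norm (ustar k) ≤ ∑ k, l1norm (ubar k))
    (T1 : Fin K → Finset (Fin m))
    (hcard : ∀ k, s ≤ ((support (ubar k))ᶜ : Finset (Fin m)).card)
    (hT1sub : ∀ k, T1 k ⊆ (support (ubar k))ᶜ)
    (hT1card : ∀ k, (T1 k).card = s)
    (hT1max : ∀ k, ∀ i ∈ T1 k, ∀ j ∈ (support (ubar k))ᶜ \ T1 k,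
      |(ustar k - ubar k) j| ≤ |(ustar k - ubar k) i|)
    (c ε : ℝ) (hc : 0 ≤ c) (hε : 0 ≤ ε)
    (hBh : ∀ k, l2norm (B.mulVec (ustar k - ubar k)) ≤ 2 * c * ε) :
    ∑ k, l2norm (restrict (support (ubar k) ∪ T1 k) (ustar k - ubar k)) ≤
      (K : ℝ) * (1 - Real.sqrt 2 * δ / (1 - δ))⁻¹ *
        (2 * Real.sqrt (1 + δ) / (1 - δ)) * c * ε :=
  stmt7_general hs B δ hδ hB ubar ustar hsp hopt T1 hT1sub hT1card hT1max c ε hBh
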